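/- Let (r_k)_{k≥1} be a real sequence such that the ranks of the finite Hankel matrices (r_{i+j+1})_{0≤i,j≤m−1}, m ≥ 1, are bounded above, and let n be their supremum. Then there exist a real n×n matrix F, a real 1×n matrix H and a real n×1 matrix N such that r_k = H F^{k−1} N for all k ≥ 1. -/
import Mathlib


open Matrix Module

namespace Stmt3Aux

/-- The row functional of the infinite Hankel matrix of `r`, for row `j`. -/
noncomputable def phi (r : ℕ → ℝ) (n j : ℕ) : (Fin (n + 1) → ℝ) →ₗ[ℝ] ℝ where
  toFun c := ∑ i : Fin (n + 1), c i * r ((i : ℕ) + j + 1)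
  map_add' x y := by simp [add_mul, Finset.sum_add_distrib]
  map_smul' t x := by simp [Finset.mul_sum, mul_assoc]

/-- Common kernel of the first `m` row functionals. -/
noncomputable def Kk (r : ℕ → ℝ) (n m : ℕ) : Submodule ℝ (Fin (n + 1) → ℝ) :=
  ⨅ j ∈ Finset.range m, LinearMap.ker (phi r n j)

lemma mem_Kk {r : ℕ → ℝ} {n m : ℕ} {c : Fin (n + 1) → ℝ} :
    c ∈ Kk r n m ↔ ∀ j < m, ∑ i : Fin (n + 1), c i * r ((i : ℕ) + j + 1) = 0 := by
  simp [Kk, phi, Submodule.mem_iInf, LinearMap.mem_ker]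

lemma Kk_antitone {r : ℕ → ℝ} {n m m' : ℕ} (h : m ≤ m') : Kk r n m' ≤ Kk r n m := by
  intro c hc
  rw [mem_Kk] at hc ⊢
  exact fun j hj => hc j (lt_of_lt_of_le hj h)

lemma Kk_ne_bot {r : ℕ → ℝ} {n : ℕ}
    (hub : ∀ m : ℕ,
      (Matrix.of fun i j : Fin (m + 1) => r ((i : ℕ) + (j : ℕ) + 1)).rank ≤ n)
    (m : ℕ) : Kk r n m ≠ ⊥ := by
  classical
  set M := m + n with hM
  set A : Matrix (Fin (M + 1)) (Fin (M + 1)) ℝ :=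
    Matrix.of fun i j : Fin (M + 1) => r ((i : ℕ) + (j : ℕ) + 1) with hA
  set B : Matrix (Fin m) (Fin (n + 1)) ℝ :=
    Matrix.of fun j i => r ((i : ℕ) + (j : ℕ) + 1) with hB
  set P : Matrix (Fin m) (Fin (M + 1)) ℝ :=
    Matrix.of fun j j' => if (j' : ℕ) = (j : ℕ) then (1 : ℝ) else 0 with hP
  set Q : Matrix (Fin (M + 1)) (Fin (n + 1)) ℝ :=
    Matrix.of fun i' i => if (i' : ℕ) = (i : ℕ) then (1 : ℝ) else 0 with hQ
  have hPA : ∀ (j : Fin m) (i' : Fin (M + 1)),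
      (P * A) j i' = A ⟨(j : ℕ), by omega⟩ i' := by
    intro j i'
    rw [Matrix.mul_apply, Finset.sum_eq_single (⟨(j : ℕ), by omega⟩ : Fin (M + 1))]
    · simp [hP]
    · intro b _ hb
      have : (b : ℕ) ≠ (j : ℕ) := by simpa [Fin.ext_iff] using hb
      simp [hP, this]
    · simp
  have hBPAQ : B = P * A * Q := by
    ext j i
    rw [Matrix.mul_apply]
    rw [Finset.sum_eq_single (⟨(i : ℕ), by omega⟩ : Fin (M + 1))]
    · rw [hPA]
      simp [hB, hA, hQ]
      congr 1
      omega
    · intro b _ hb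
      have : (b : ℕ) ≠ (i : ℕ) := by simpa [Fin.ext_iff] using hb
      simp [hQ, this]
    · simp
  have hrankB : B.rank ≤ n := by
    rw [hBPAQ]
    calc (P * A * Q).rank ≤ (P * A).rank := Matrix.rank_mul_le_left _ _
      _ ≤ A.rank := Matrix.rank_mul_le_right _ _
      _ ≤ n := hub M
  have hker : LinearMap.ker B.mulVecLin ≤ Kk r n m := by
    intro c hc
    rw [LinearMap.mem_ker] at hc
    rw [mem_Kk]
    intro j hj
    have := congrFun hc ⟨j, hj⟩
    simp only [Matrix.mulVecLin_apply, Matrix.mulVec, dotProduct,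
      Pi.zero_apply] at this
    rw [← this]
    apply Finset.sum_congr rfl
    intro i _
    simp [hB, mul_comm]
  intro hbot
  have hkerbot : LinearMap.ker B.mulVecLin = ⊥ := le_bot_iff.mp (hbot ▸ hker)
  have hrn := LinearMap.finrank_range_add_finrank_ker B.mulVecLin
  rw [hkerbot, finrank_bot] at hrn
  have hfr : finrank ℝ (Fin (n + 1) → ℝ) = n + 1 := by simp
  have hBr : B.rank = finrank ℝ (LinearMap.range B.mulVecLin) := rfl
  rw [hfr] at hrn
  omega

/-- the shift operator on sequences -/
def shiftL : (ℕ → ℝ) →ₗ[ℝ] (ℕ → ℝ) where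
  toFun f := fun j => f (j + 1)
  map_add' _ _ := rfl
  map_smul' _ _ := rfl

/-- From a nontrivial dependency among consecutive rows of the Hankel matrix,
extract a linear recurrence of order `n`. -/
lemma recurrence_of_dep {r : ℕ → ℝ} {n : ℕ}
    (c : Fin (n + 1) → ℝ) (hcne : c ≠ 0)
    (hrel : ∀ t : ℕ, ∑ i : Fin (n + 1), c i * r ((i : ℕ) + t + 1) = 0) :
    ∃ a : Fin n → ℝ, ∀ t : ℕ,
      ∑ i : Fin n, a i * r ((i : ℕ) + t + 1) = r (n + t + 1) := by
  classical
  set v : ℕ → (ℕ → ℝ) := fun i j => r (i + j + 1) with hv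
  have hs : (Finset.univ.filter (fun i => c i ≠ 0)).Nonempty := by
    obtain ⟨i, hi⟩ := Function.ne_iff.mp hcne
    exact ⟨i, by simpa using hi⟩
  set p : Fin (n + 1) := (Finset.univ.filter (fun i => c i ≠ 0)).max' hs with hpdef
  have hp : c p ≠ 0 := by
    have := (Finset.univ.filter (fun i => c i ≠ 0)).max'_mem hs
    simpa using this
  have hgt : ∀ i : Fin (n + 1), p < i → c i = 0 := by
    intro i hi
    by_contra h
    exact absurd (Finset.le_max' _ i (by simpa using h)) (not_le.mpr hi)
  set Wp : Submodule ℝ (ℕ → ℝ) := Submodule.span ℝ (v '' Set.Iio (p : ℕ)) with hWp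
  have hsum : ∑ i : Fin (n + 1), c i • v (i : ℕ) = 0 := by
    funext t
    simp only [Finset.sum_apply, Pi.smul_apply, smul_eq_mul, Pi.zero_apply, hv]
    exact hrel t
  have hvp : v (p : ℕ) ∈ Wp := by
    have herase : ∑ i ∈ Finset.univ.erase p, c i • v (i : ℕ) ∈ Wp := by
      apply Submodule.sum_mem
      intro i hi
      rcases lt_trichotomy i p with h | h | h
      · exact Submodule.smul_mem _ _ (Submodule.subset_span ⟨(i : ℕ), h, rfl⟩)
      · exact absurd h (Finset.ne_of_mem_erase hi)
      · rw [hgt i h, zero_smul]; exact Submodule.zero_mem _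
    have hsplit : c p • v (p : ℕ) + ∑ i ∈ Finset.univ.erase p, c i • v (i : ℕ) = 0 :=
      (Finset.add_sum_erase _ (fun i => c i • v (i : ℕ)) (Finset.mem_univ p)).trans hsum
    have : c p • v (p : ℕ) = -∑ i ∈ Finset.univ.erase p, c i • v (i : ℕ) := by
      linear_combination (norm := module) hsplit
    have hmem : c p • v (p : ℕ) ∈ Wp := this ▸ Submodule.neg_mem _ herase
    have := Submodule.smul_mem Wp (c p)⁻¹ hmem
    rwa [smul_smul, inv_mul_cancel₀ hp, one_smul] at this
  have hSv : ∀ i : ℕ, shiftL (v i) = v (i + 1) := by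
    intro i
    funext j
    show r (i + (j + 1) + 1) = r ((i + 1) + j + 1)
    congr 1
    omega
  have hmap : Submodule.map shiftL Wp ≤ Wp := by
    rw [hWp, Submodule.map_span, Submodule.span_le]
    rintro _ ⟨_, ⟨i, hi, rfl⟩, rfl⟩
    have hi' : i < (p : ℕ) := hi
    rw [hSv]
    rcases Nat.lt_or_ge (i + 1) (p : ℕ) with h | h
    · exact Submodule.subset_span ⟨i + 1, h, rfl⟩
    · rw [show i + 1 = (p : ℕ) by omega]
      exact hvp
  have hall : ∀ m : ℕ, v m ∈ Wp := by
    intro m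
    induction m with
    | zero =>
      rcases Nat.eq_zero_or_pos (p : ℕ) with h | h
      · have : v 0 = v (p : ℕ) := by rw [h]
        rw [this]; exact hvp
      · exact Submodule.subset_span ⟨0, h, rfl⟩
    | succ m ih =>
      have : shiftL (v m) ∈ Submodule.map shiftL Wp := ⟨v m, ih, rfl⟩
      rw [hSv] at this
      exact hmap this
  have hrange : v '' Set.Iio n = Set.range (fun i : Fin n => v (i : ℕ)) := by
    ext f
    constructor
    · rintro ⟨i, hi, rfl⟩; exact ⟨⟨i, hi⟩, rfl⟩
    · rintro ⟨i, rfl⟩; exact ⟨(i : ℕ), i.isLt, rfl⟩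
  have hvn : v n ∈ Submodule.span ℝ (Set.range (fun i : Fin n => v (i : ℕ))) := by
    rw [← hrange]
    have hsub : Wp ≤ Submodule.span ℝ (v '' Set.Iio n) := by
      rw [hWp]
      apply Submodule.span_mono
      apply Set.image_mono
      intro y hy
      have : (p : ℕ) ≤ n := Nat.lt_succ_iff.mp p.isLt
      exact lt_of_lt_of_le hy this
    exact hsub (hall n)
  rw [Submodule.mem_span_range_iff_exists_fun] at hvn
  obtain ⟨a, ha⟩ := hvn
  refine ⟨a, fun t => ?_⟩
  have := congrFun ha t
  simpa only [Finset.sum_apply, Pi.smul_apply, smul_eq_mul, hv] using this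

/-- From a linear recurrence of order `n`, build a realization of dimension `n`. -/
lemma realization_of_recurrence (r : ℕ → ℝ) (n : ℕ) (a : Fin n → ℝ)
    (hrec : ∀ t : ℕ, ∑ i : Fin n, a i * r ((i : ℕ) + t + 1) = r (n + t + 1)) :
    ∃ (F : Matrix (Fin n) (Fin n) ℝ) (H : Matrix (Fin 1) (Fin n) ℝ)
      (N : Matrix (Fin n) (Fin 1) ℝ),
      ∀ k : ℕ, 1 ≤ k → r k = (H * F ^ (k - 1) * N) 0 0 := by
  classical
  rcases Nat.eq_zero_or_pos n with hn | hn
  · subst hn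
    refine ⟨0, 0, 0, fun k hk => ?_⟩
    have h0 := hrec (k - 1)
    simp only [Finset.univ_eq_empty, Finset.sum_empty] at h0
    rw [show 0 + (k - 1) + 1 = k by omega] at h0
    simp [← h0]
  · set F : Matrix (Fin n) (Fin n) ℝ :=
      Matrix.of fun i j => if (i : ℕ) + 1 < n then
        (if (j : ℕ) = (i : ℕ) + 1 then (1 : ℝ) else 0) else a j with hF
    set Hm : Matrix (Fin 1) (Fin n) ℝ :=
      Matrix.of fun _ j => if (j : ℕ) = 0 then (1 : ℝ) else 0 with hHm
    set Nm : Matrix (Fin n) (Fin 1) ℝ :=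
      Matrix.of fun i _ => r ((i : ℕ) + 1) with hNm
    set x : ℕ → Fin n → ℝ := fun k i => r (k + (i : ℕ) + 1) with hx
    have claim1 : ∀ k : ℕ, F *ᵥ x k = x (k + 1) := by
      intro k
      funext i
      simp only [Matrix.mulVec, dotProduct]
      by_cases h : (i : ℕ) + 1 < n
      · simp only [hF, Matrix.of_apply, if_pos h]
        rw [Finset.sum_eq_single (⟨(i : ℕ) + 1, h⟩ : Fin n)]
        · simp only [hx, if_pos rfl, if_true, one_mul]
          congr 1
          omega
        · intro b _ hb
          have : (b : ℕ) ≠ (i : ℕ) + 1 := by simpa [Fin.ext_iff] using hb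
          simp [this]
        · simp
      · simp only [hF, Matrix.of_apply, if_neg h]
        have hsum : ∑ j : Fin n, a j * x k j = ∑ j : Fin n, a j * r ((j : ℕ) + k + 1) := by
          apply Finset.sum_congr rfl
          intro j _
          simp only [hx]
          congr 2
          omega
        rw [hsum, hrec k, hx]
        have hi : (i : ℕ) + 1 = n := by omega
        congr 1
        omega
    have claim2 : ∀ k : ℕ, F ^ k *ᵥ x 0 = x k := by
      intro k
      induction k with
      | zero => rw [pow_zero, Matrix.one_mulVec]
      | succ k ih => rw [pow_succ', ← Matrix.mulVec_mulVec, ih, claim1]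
    refine ⟨F, Hm, Nm, fun k hk => ?_⟩
    have e1 : ∀ j : Fin n, (Hm * F ^ (k - 1)) 0 j = (F ^ (k - 1)) ⟨0, hn⟩ j := by
      intro j
      rw [Matrix.mul_apply, Finset.sum_eq_single (⟨0, hn⟩ : Fin n)]
      · simp [hHm]
      · intro b _ hb
        have : (b : ℕ) ≠ 0 := by simpa [Fin.ext_iff] using hb
        simp [hHm, this]
      · simp
    rw [Matrix.mul_apply]
    simp_rw [e1]
    have e2 : ∑ j : Fin n, (F ^ (k - 1)) ⟨0, hn⟩ j * Nm j 0
        = (F ^ (k - 1) *ᵥ x 0) ⟨0, hn⟩ := by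
      simp only [Matrix.mulVec, dotProduct]
      apply Finset.sum_congr rfl
      intro j _
      simp only [hNm, hx, Matrix.of_apply]
      congr 2
      omega
    rw [e2, claim2, hx]
    show r k = r ((k - 1) + 0 + 1)
    congr 1
    omega

end Stmt3Aux

/-- If the ranks of the Hankel matrices of `(r_k)_{k ≥ 1}`
are bounded above with supremum `n` (for a nonempty bounded set of naturals,
the supremum is attained, so it is the maximum), then the sequence admits a
realization `(H, F, N)` of dimension `n`: `r k = H F^(k-1) N` for all `k ≥ 1`. -/
theorem stmt_3 (r : ℕ → ℝ) (n : ℕ)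
    (hub : ∀ m : ℕ,
      (Matrix.of fun i j : Fin (m + 1) => r ((i : ℕ) + (j : ℕ) + 1)).rank ≤ n)
    (hsup : ∃ m : ℕ,
      (Matrix.of fun i j : Fin (m + 1) => r ((i : ℕ) + (j : ℕ) + 1)).rank = n) :
    ∃ (F : Matrix (Fin n) (Fin n) ℝ) (H : Matrix (Fin 1) (Fin n) ℝ)
      (N : Matrix (Fin n) (Fin 1) ℝ),
      ∀ k : ℕ, 1 ≤ k → r k = (H * F ^ (k - 1) * N) 0 0 := by
  classical
  open Stmt3Aux in
  -- stabilization of the decreasing chain of kernels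
  obtain ⟨m0, hm0⟩ : ∃ m0 : ℕ, finrank ℝ (Kk r n m0)
      = sInf (Set.range fun m => finrank ℝ (Kk r n m)) :=
    Nat.sInf_mem (Set.range_nonempty _)
  have key : ∀ m : ℕ, Stmt3Aux.Kk r n m0 ≤ Stmt3Aux.Kk r n m := by
    intro m
    rcases le_or_gt m m0 with h | h
    · exact Stmt3Aux.Kk_antitone h
    · have h1 : Stmt3Aux.Kk r n m ≤ Stmt3Aux.Kk r n m0 := Stmt3Aux.Kk_antitone h.le
      have h2 : finrank ℝ (Stmt3Aux.Kk r n m0) ≤ finrank ℝ (Stmt3Aux.Kk r n m) := by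
        rw [hm0]
        exact Nat.sInf_le ⟨m, rfl⟩
      exact (Submodule.eq_of_le_of_finrank_le h1 h2).ge
  obtain ⟨c, hcK, hcne⟩ := (Submodule.ne_bot_iff _).mp (Stmt3Aux.Kk_ne_bot hub m0)
  have hrel : ∀ t : ℕ, ∑ i : Fin (n + 1), c i * r ((i : ℕ) + t + 1) = 0 := by
    intro t
    exact (Stmt3Aux.mem_Kk.mp (key (t + 1) hcK)) t (Nat.lt_succ_self t)
  obtain ⟨a, hrec⟩ := Stmt3Aux.recurrence_of_dep c hcne hrel
  exact Stmt3Aux.realization_of_recurrence r n a hrec
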